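/- arXiv:1712.09925 — 3 statements merged into one kernel-verified Lean document; each statement's English description precedes it below -/
import Mathlib

section
/- For integers q, m ≥ 0 and nonnegative-integer exponents μ_1,…,μ_{m+1} with μ_1 + … + μ_{m+1} > m, the symmetrized expression Sym_{1,…,m+1} [ x_1^q · ∏_{i=1}^{m+1}(x_i−1)^{μ_i} / ((x_1−x_2)⋯(x_1−x_{m+1})) ], which is a polynomial, vanishes at the point x_1 = x_2 = … = x_{m+1} = 1. More precisely, when expanded into monomials in (x_1−1),…,(x_{m+1}−1), every monomial has total degree at least μ_1+…+μ_{m+1} − m. -/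
/-!
Write `y i = x i - 1` and let `V` be the Vandermonde product of the `y i`. Since the denominator
`D = ∏_{j ≠ 0} (y 0 - y j)` divides `V`, say `V = D * E`, multiplying the symmetrized sum by `V`
turns it into the antisymmetrization `A` of `N * E`, where `N = (y 0 + 1) ^ q * ∏ i, y i ^ μ i`.
An antisymmetric polynomial vanishes when two variables are identified, so it is divisible by
each of the pairwise non-associated primes `y a - y b`, hence by `V`; the quotient `Q = A / V` is
the required polynomial. The lowest degree (the order, as a power series) is additive in a domain
and does not drop under antisymmetrization, so
`ord Q = ord A - ord V ≥ (∑ μ + ord E) - (m + ord E) = ∑ μ - m`.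
-/

open Finset MvPolynomial

section Collapse

variable {R σ : Type*} [CommRing R]

lemma X_sub_X_ne_zero [Nontrivial R] {a b : σ} (hab : a ≠ b) :
    (X a - X b : MvPolynomial σ R) ≠ 0 :=
  sub_ne_zero.2 fun h => hab (X_injective h)

variable [DecidableEq σ]

noncomputable def collapse (a b : σ) : MvPolynomial σ R →ₐ[R] MvPolynomial σ R :=
  aeval (Function.update X b (X a))

@[simp]
lemma collapse_X (a b i : σ) :
    collapse a b (X i : MvPolynomial σ R) = if i = b then X a else X i := by
  simp [collapse, Function.update_apply]

lemma collapse_X_sub_X (a b : σ) : collapse a b (X a - X b : MvPolynomial σ R) = 0 := by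
  by_cases hab : a = b <;> simp [hab]

lemma X_sub_X_dvd_sub_collapse (a b : σ) (P : MvPolynomial σ R) :
    X a - X b ∣ P - collapse a b P := by
  let mk := Ideal.Quotient.mkₐ R (Ideal.span {(X a - X b : MvPolynomial σ R)})
  have hmk : mk.comp (collapse a b) = mk := by
    refine algHom_ext fun i => ?_
    by_cases hib : i = b
    · subst hib
      simp [mk, Ideal.Quotient.mkₐ_eq_mk, Ideal.Quotient.eq]
    · simp [hib]
  rw [← Ideal.mem_span_singleton, ← Ideal.Quotient.eq, ← Ideal.Quotient.mkₐ_eq_mk R]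
  exact (AlgHom.congr_fun hmk P).symm

lemma X_sub_X_dvd_iff_collapse_eq_zero {a b : σ} {P : MvPolynomial σ R} :
    X a - X b ∣ P ↔ collapse a b P = 0 := by
  constructor
  · rintro ⟨c, rfl⟩
    rw [map_mul, collapse_X_sub_X, zero_mul]
  · intro h
    simpa [h] using X_sub_X_dvd_sub_collapse a b P

variable [IsDomain R]

lemma prime_X_sub_X {a b : σ} (hab : a ≠ b) : Prime (X a - X b : MvPolynomial σ R) := by
  refine ⟨X_sub_X_ne_zero hab, fun hu => ?_, fun P P' hPP' => ?_⟩
  · simpa [collapse_X_sub_X] using hu.map (collapse a b)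
  · simp_rw [X_sub_X_dvd_iff_collapse_eq_zero, map_mul] at hPP' ⊢
    exact mul_eq_zero.1 hPP'

lemma eq_or_eq_of_X_sub_X_dvd_X_sub_X {a b c d : σ} (hcd : c ≠ d)
    (h : (X a - X b : MvPolynomial σ R) ∣ X c - X d) : c = a ∨ c = b := by
  by_contra! hc
  rw [X_sub_X_dvd_iff_collapse_eq_zero, map_sub, collapse_X, collapse_X, if_neg hc.2] at h
  split_ifs at h with hdb
  · exact X_sub_X_ne_zero hc.1 h
  · exact X_sub_X_ne_zero hcd h

end Collapse

theorem Finset.prod_primes_dvd_of_pairwise_not_dvd {ι M : Type*} [CommMonoidWithZero M]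
    [IsCancelMulZero M] {s : Finset ι} {f : ι → M} {z : M} (hp : ∀ i ∈ s, Prime (f i))
    (hs : (s : Set ι).Pairwise fun i j => ¬ f i ∣ f j) (hz : ∀ i ∈ s, f i ∣ z) :
    ∏ i ∈ s, f i ∣ z := by
  classical
  induction s using Finset.induction_on generalizing z with
  | empty => simp
  | insert i s hi ih =>
    obtain ⟨w, rfl⟩ := hz i (mem_insert_self i s)
    rw [prod_insert hi]
    refine mul_dvd_mul_left _ (ih (fun j hj => hp j (mem_insert_of_mem hj))
      (hs.mono (by simp)) fun j hj => ?_)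
    refine ((hp j (mem_insert_of_mem hj)).dvd_or_dvd (hz j (mem_insert_of_mem hj))).resolve_left ?_
    exact hs (by simp [hj]) (by simp) (by rintro rfl; exact hi hj)

section Antisymmetrization

variable {R ι : Type*} [CommRing R] [DecidableEq ι]

lemma collapse_rename_swap (a b : ι) (P : MvPolynomial ι R) :
    collapse a b (rename (Equiv.swap a b) P) = collapse a b P := by
  rw [← AlgHom.comp_apply]
  congr 1
  refine algHom_ext fun i => ?_
  simp only [AlgHom.comp_apply, rename_X, collapse_X, Equiv.swap_apply_def]
  split_ifs <;> simp_all

variable [Fintype ι]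

noncomputable def antisymmetrization (P : MvPolynomial ι R) : MvPolynomial ι R :=
  ∑ τ : Equiv.Perm ι, Equiv.Perm.sign τ • rename τ P

lemma collapse_antisymmetrization {a b : ι} (hab : a ≠ b) (P : MvPolynomial ι R) :
    collapse a b (antisymmetrization P) = 0 := by
  rw [antisymmetrization, map_sum]
  refine sum_ninvolution (Equiv.swap a b * ·) (fun τ => ?_)
    (fun τ _ h => hab (Equiv.swap_mul_eq_iff.1 h)) (fun _ => mem_univ _)
    (Equiv.swap_mul_self_mul a b)
  simp only [Units.smul_def, map_zsmul, Equiv.Perm.sign_mul, Equiv.Perm.sign_swap hab,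
    Equiv.Perm.coe_mul, ← rename_rename, collapse_rename_swap]
  simp

end Antisymmetrization

section Vandermonde

variable (R : Type*) [CommRing R]

noncomputable def vandermondePoly (n : ℕ) : MvPolynomial (Fin n) R :=
  ∏ i, ∏ j ∈ Ioi i, (X j - X i)

variable {R} {n : ℕ}

lemma eval_vandermondePoly (y : Fin n → R) :
    eval y (vandermondePoly R n) = (Matrix.vandermonde y).det := by
  simp [vandermondePoly, Matrix.det_vandermonde]

lemma eval_comp_perm_vandermondePoly (y : Fin n → R) (τ : Equiv.Perm (Fin n)) :
    eval (y ∘ τ) (vandermondePoly R n) =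
      ((Equiv.Perm.sign τ : ℤ) : R) * eval y (vandermondePoly R n) := by
  rw [eval_vandermondePoly, eval_vandermondePoly, ← Matrix.det_permute]
  rfl

variable [IsDomain R]

lemma vandermondePoly_ne_zero : vandermondePoly R n ≠ 0 :=
  prod_ne_zero_iff.2 fun _ _ => prod_ne_zero_iff.2 fun _ hj =>
    X_sub_X_ne_zero (mem_Ioi.1 hj).ne'

lemma vandermondePoly_dvd_of_collapse_eq_zero {P : MvPolynomial (Fin n) R}
    (h : ∀ a b, a ≠ b → collapse a b P = 0) : vandermondePoly R n ∣ P := by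
  have hlt (p) (hp : p ∈ univ.sigma fun i : Fin n => Ioi i) : p.1 < p.2 :=
    mem_Ioi.1 (mem_sigma.1 hp).2
  rw [vandermondePoly, prod_sigma']
  refine prod_primes_dvd_of_pairwise_not_dvd (fun p hp => prime_X_sub_X (hlt p hp).ne')
    (fun p hp p' hp' hne hdvd => ?_)
    fun p hp => X_sub_X_dvd_iff_collapse_eq_zero.2 (h _ _ (hlt p hp).ne')
  have h2 := eq_or_eq_of_X_sub_X_dvd_X_sub_X (hlt p' hp').ne' hdvd
  have h1 := eq_or_eq_of_X_sub_X_dvd_X_sub_X (hlt p' hp').ne (by simpa using hdvd.neg_right)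
  have h12 := hlt p hp
  have h12' := hlt p' hp'
  obtain ⟨i, j⟩ := p
  obtain ⟨i', j'⟩ := p'
  dsimp only at *
  rcases h1 with rfl | rfl <;> rcases h2 with rfl | rfl
  all_goals first | exact hne rfl | order

lemma vandermondePoly_dvd_antisymmetrization (P : MvPolynomial (Fin n) R) :
    vandermondePoly R n ∣ antisymmetrization P :=
  vandermondePoly_dvd_of_collapse_eq_zero fun _ _ hab => collapse_antisymmetrization hab P

lemma eval_vandermondePoly_ne_zero {y : Fin n → R} (hy : Function.Injective y) :
    eval y (vandermondePoly R n) ≠ 0 := by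
  rwa [eval_vandermondePoly, Matrix.det_vandermonde_ne_zero_iff]

end Vandermonde

lemma sum_eval_comp_perm_div_vandermondePoly {K : Type*} [Field K] {n : ℕ}
    (P : MvPolynomial (Fin n) K) (y : Fin n → K) :
    ∑ τ : Equiv.Perm (Fin n), eval (y ∘ τ) P / eval (y ∘ τ) (vandermondePoly K n) =
      eval y (antisymmetrization P) / eval y (vandermondePoly K n) := by
  rw [antisymmetrization, map_sum, sum_div]
  refine sum_congr rfl fun τ _ => ?_
  rw [eval_comp_perm_vandermondePoly, Units.smul_def, map_zsmul, eval_rename]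
  rcases Int.units_eq_one_or (Equiv.Perm.sign τ) with h | h <;> simp [h, neg_div, div_neg]

section Order

variable {R ι κ : Type*} [CommRing R]

lemma le_order_coe_rename (e : ι ≃ κ) (P : MvPolynomial ι R) :
    (P : MvPowerSeries ι R).order ≤ (rename e P : MvPowerSeries κ R).order := by
  refine MvPowerSeries.le_order fun d hd => ?_
  have hd' : d = (d.mapDomain e.symm).mapDomain e := by
    rw [← Finsupp.mapDomain_comp, e.self_comp_symm, Finsupp.mapDomain_id]
  rw [coeff_coe, hd', coeff_rename_mapDomain _ e.injective, ← coeff_coe]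
  exact MvPowerSeries.coeff_of_lt_order (by rwa [Finsupp.degree_mapDomain])

lemma order_coe_le_degree_of_mem_support {P : MvPolynomial ι R} {d : ι →₀ ℕ}
    (hd : d ∈ P.support) :
    (P : MvPowerSeries ι R).order ≤ d.degree :=
  MvPowerSeries.order_le (by rwa [coeff_coe, ← mem_support_iff])

lemma order_coe_X_sub_X [Nontrivial R] {a b : ι} (hab : a ≠ b) :
    ((X a - X b : MvPolynomial ι R) : MvPowerSeries ι R).order = 1 := by
  classical
  refine MvPowerSeries.order_eq_nat.2 ⟨⟨Finsupp.single a 1, ?_, by simp⟩, fun d hd => ?_⟩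
  · simp [coeff_coe, coeff_X, Finsupp.single_left_inj, hab.symm]
  · simp_all [coeff_coe, Finsupp.degree_eq_zero_iff]

lemma le_order_coe_antisymmetrization [Fintype ι] [DecidableEq ι] (P : MvPolynomial ι R) :
    (P : MvPowerSeries ι R).order ≤ (antisymmetrization P : MvPowerSeries ι R).order := by
  refine MvPowerSeries.le_order fun d hd => ?_
  rw [coeff_coe, antisymmetrization, coeff_sum]
  refine sum_eq_zero fun τ _ => ?_
  rw [Units.smul_def, coeff_smul, ← coeff_coe,
    MvPowerSeries.coeff_of_lt_order (hd.trans_le (le_order_coe_rename τ P)), smul_zero]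

lemma le_order_coe_prod_X_pow [Fintype ι] (μ : ι → ℕ) :
    ((∑ i, μ i : ℕ) : ℕ∞) ≤
      ((∏ i, X i ^ μ i : MvPolynomial ι R) : MvPowerSeries ι R).order := by
  rw [← coeToMvPowerSeries.ringHom_apply, map_prod, Nat.cast_sum]
  refine le_trans (sum_le_sum fun i _ => ?_) (MvPowerSeries.le_order_prod _ _)
  rw [map_pow, coeToMvPowerSeries.ringHom_apply, coe_X]
  refine le_trans ?_ (MvPowerSeries.le_order_pow _)
  have h1 : 1 ≤ (MvPowerSeries.X i : MvPowerSeries ι R).order :=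
    MvPowerSeries.one_le_order_iff_constCoeff_eq_zero.2 (MvPowerSeries.constantCoeff_X i)
  calc (μ i : ℕ∞) = μ i • 1 := by simp
    _ ≤ _ := by gcongr

variable [IsDomain R]

lemma le_order_coe_add_of_antisymmetrization_eq [Fintype ι] [DecidableEq ι]
    {D E N Q : MvPolynomial ι R} (hE : E ≠ 0) (h : antisymmetrization (N * E) = D * E * Q) :
    (N : MvPowerSeries ι R).order ≤
      (D : MvPowerSeries ι R).order + (Q : MvPowerSeries ι R).order := by
  have hE' : (E : MvPowerSeries ι R).order ≠ ⊤ := by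
    rwa [Ne, MvPowerSeries.order_eq_top_iff, coe_eq_zero_iff]
  have hle := calc
    (N : MvPowerSeries ι R).order + (E : MvPowerSeries ι R).order
        ≤ ((N * E : MvPolynomial ι R) : MvPowerSeries ι R).order := by
          rw [MvPolynomial.coe_mul]; exact MvPowerSeries.le_order_mul
    _ ≤ (antisymmetrization (N * E) : MvPowerSeries ι R).order :=
          le_order_coe_antisymmetrization _
    _ = (D : MvPowerSeries ι R).order + (Q : MvPowerSeries ι R).order +
          (E : MvPowerSeries ι R).order := by
          rw [h, MvPolynomial.coe_mul, MvPolynomial.coe_mul, MvPowerSeries.order_mul,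
            MvPowerSeries.order_mul, add_right_comm]
  exact (ENat.add_le_add_iff_right hE').1 hle

end Order

section LagrangeDenominator

variable (R : Type*) [CommRing R] (n : ℕ)

noncomputable def lagrangeDenominator : MvPolynomial (Fin (n + 1)) R :=
  ∏ j ∈ univ.erase 0, (X 0 - X j)

lemma lagrangeDenominator_dvd_vandermondePoly :
    lagrangeDenominator R n ∣ vandermondePoly R (n + 1) := by
  have h : lagrangeDenominator R n = (-1) ^ n * ∏ j ∈ Ioi 0, (X j - X 0) := by
    have hIoi : Ioi (0 : Fin (n + 1)) = univ.erase 0 := by ext; simp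
    rw [lagrangeDenominator, hIoi, prod_congr rfl fun j _ => (neg_sub (X j) (X 0)).symm,
      prod_neg]
    simp
  rw [h]
  exact ((isUnit_neg_one.pow n).mul_left_dvd).2 (dvd_prod_of_mem _ (mem_univ 0))

variable {R n} [IsDomain R]

lemma order_coe_lagrangeDenominator :
    (lagrangeDenominator R n : MvPowerSeries (Fin (n + 1)) R).order = n := by
  rw [lagrangeDenominator, ← coeToMvPowerSeries.ringHom_apply, map_prod,
    MvPowerSeries.order_prod]
  simp only [coeToMvPowerSeries.ringHom_apply]
  rw [sum_congr rfl fun j hj => order_coe_X_sub_X (ne_of_mem_erase hj).symm]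
  simp

end LagrangeDenominator

lemma sum_eval_comp_perm_div_lagrangeDenominator {K : Type*} [Field K] {n : ℕ}
    {N E Q : MvPolynomial (Fin (n + 1)) K}
    (hVE : vandermondePoly K (n + 1) = lagrangeDenominator K n * E)
    (hQ : antisymmetrization (N * E) = vandermondePoly K (n + 1) * Q)
    {y : Fin (n + 1) → K} (hy : Function.Injective y) :
    ∑ σ : Equiv.Perm (Fin (n + 1)),
        eval (y ∘ σ) N / eval (y ∘ σ) (lagrangeDenominator K n) = eval y Q := by
  have hterm (σ : Equiv.Perm (Fin (n + 1))) :
      eval (y ∘ σ) N / eval (y ∘ σ) (lagrangeDenominator K n) =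
        eval (y ∘ σ) (N * E) / eval (y ∘ σ) (vandermondePoly K (n + 1)) := by
    have hVσ := eval_vandermondePoly_ne_zero (hy.comp σ.injective)
    rw [hVE, eval_mul] at hVσ ⊢
    rw [eval_mul, mul_div_mul_right _ _ (right_ne_zero_of_mul hVσ)]
  rw [sum_congr rfl fun σ _ => hterm σ, sum_eval_comp_perm_div_vandermondePoly, hQ, eval_mul,
    mul_div_cancel_left₀ _ (eval_vandermondePoly_ne_zero hy)]

/-- If `μ₁ + … + μ_{m+1} > m`, the symmetrization of
`x₁^q ∏_i (x_i − 1)^{μ_i} / ((x₁−x₂)⋯(x₁−x_{m+1}))` — a polynomial — vanishes at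
`x₁ = … = x_{m+1} = 1`; more precisely, expanded into monomials in the variables
`(x_i − 1)`, every monomial has total degree at least `μ₁+…+μ_{m+1} − m`. -/
theorem symmetrization_vanishing (m q : ℕ) (μ : Fin (m + 1) → ℕ)
    (hμ : m < ∑ i, μ i) :
    ∃ Q : MvPolynomial (Fin (m + 1)) ℂ,
      (∀ x : Fin (m + 1) → ℂ, Function.Injective x →
        (∑ σ : Equiv.Perm (Fin (m + 1)),
          (x (σ 0)) ^ q * (∏ i, (x (σ i) - 1) ^ μ i) /
            ∏ j ∈ Finset.univ.erase 0, (x (σ 0) - x (σ j)))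
          = MvPolynomial.eval (fun i => x i - 1) Q) ∧
      (∀ d ∈ Q.support, (∑ i, μ i) - m ≤ d.sum fun _ e => e) ∧
      MvPolynomial.coeff 0 Q = 0 := by
  obtain ⟨E, hVE⟩ := lagrangeDenominator_dvd_vandermondePoly ℂ m
  set N : MvPolynomial (Fin (m + 1)) ℂ := (X 0 + 1) ^ q * ∏ i, X i ^ μ i
  obtain ⟨Q, hQ⟩ := vandermondePoly_dvd_antisymmetrization (N * E)
  have hE : E ≠ 0 := right_ne_zero_of_mul (hVE ▸ vandermondePoly_ne_zero)
  have hNQ := le_order_coe_add_of_antisymmetrization_eq hE (hQ.trans (by rw [hVE]))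
  rw [order_coe_lagrangeDenominator] at hNQ
  have hN : ((∑ i, μ i : ℕ) : ℕ∞) ≤ (N : MvPowerSeries (Fin (m + 1)) ℂ).order := by
    rw [MvPolynomial.coe_mul]
    exact (le_add_left (le_order_coe_prod_X_pow μ)).trans MvPowerSeries.le_order_mul
  have hdeg : ∀ d ∈ Q.support, (∑ i, μ i) - m ≤ d.sum fun _ e => e := fun d hd => by
    have h := (hN.trans hNQ).trans (add_le_add_right (order_coe_le_degree_of_mem_support hd) _)
    norm_cast at h
    exact Nat.sub_le_iff_le_add'.2 h
  refine ⟨Q, fun x hx => ?_, hdeg, ?_⟩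
  · rw [← sum_eval_comp_perm_div_lagrangeDenominator hVE hQ
      (fun i j h => hx (sub_left_injective h))]
    simp [N, lagrangeDenominator]
  · by_contra h
    have := hdeg 0 (mem_support_iff.2 h)
    simp only [Finsupp.sum_zero_index] at this
    omega
end

section
/- For a function f of the form f(z) = (1+z)(1/z + Σ_{a=1}^∞ c_a z^{a-1}/(a−1)!) with the series convergent near 0 and c_a real, the map from the sequence (p(k))_{k≥1} defined by p(k) = [z^{-1}] (1/((k+1)(1+z))) · f(z)^{k+1} to the sequence (c_a) is invertible: Σ_{a=1}^∞ c_a z^{a-1}/(a−1)! = (1/(1+z)) · G^{(-1)}(u)|_{u = log(1+z)} − 1/z, where G(u) = Σ_{k=0}^∞ p(k)/u^{k+1} with p(0) = 1 and G^{(-1)} is the compositional (functional) inverse of the power series G. -/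
/-!
Put `F = (1 + z)(1 + z g)`, `A = (1 + z)⁻¹` and `φ = z / F`. By the hypothesis on the moments,
`H' = Σ_k [z^k](F^{k+1} A) v^k`, and the Lagrange–Bürmann formula `H'(φ) φ' = A` follows by
comparing both sides against `F^{n+1}` at `z^n`, where the residue identity
`[z^t] F^{t+1} φ' = δ_{t,0}` isolates one term. Hence `H(φ(z))` and `log(1 + z)` have the same
derivative and both vanish at `0`, so `H^{(-1)}(log(1 + z)) = φ = z / F`.
-/

open PowerSeries

/-- Composition ("substitution") of formal power series: `(psComp f g)` is
`f(g)` (intended for `g` with vanishing constant term). -/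
noncomputable def psComp (f g : PowerSeries ℝ) : PowerSeries ℝ :=
  PowerSeries.mk fun n =>
    ∑ k ∈ Finset.range (n + 1),
      (PowerSeries.coeff k f) * PowerSeries.coeff n (g ^ k)

/-- The formal power series of `log(1+z)`. -/
noncomputable def logOnePlus : PowerSeries ℝ :=
  PowerSeries.mk fun n => if n = 0 then 0 else (-1 : ℝ) ^ (n + 1) / n

namespace PowerSeries

variable {R : Type*} [CommRing R]

theorem coeff_subst_mul {φ : R⟦X⟧} (hφ : constantCoeff φ = 0) (f B : R⟦X⟧) (n : ℕ) :
    coeff n (f.subst φ * B) = ∑ k ∈ Finset.range (n + 1), coeff k f * coeff n (φ ^ k * B) := by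
  have hφs : HasSubst φ := HasSubst.of_constantCoeff_zero' hφ
  have htail : coeff n (φ ^ (n + 1) * (mk fun i ↦ coeff (i + (n + 1)) f).subst φ * B) = 0 := by
    refine X_pow_dvd_iff.mp ?_ n n.lt_succ_self
    exact (pow_dvd_pow_of_dvd (X_dvd_iff.mpr hφ) _).mul_right _ |>.mul_right _
  conv_lhs => rw [eq_X_pow_mul_shift_add_trunc (n + 1) f]
  rw [subst_add hφs, subst_mul hφs, subst_pow hφs, subst_X hφs, subst_coe hφs, add_mul,
    map_add, htail, zero_add, Polynomial.aeval_eq_sum_range' (natDegree_trunc_lt f n),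
    Finset.sum_mul, map_sum]
  refine Finset.sum_congr rfl fun k hk ↦ ?_
  rw [smul_mul_assoc, coeff_smul, smul_eq_mul, coeff_trunc, if_pos (Finset.mem_range.mp hk)]

theorem subst_eq_X_of_subst_eq_X {P Q : R⟦X⟧} (hP : constantCoeff P = 0)
    (hP₁ : IsUnit (coeff 1 P)) (hQ : constantCoeff Q = 0) (h : P.subst Q = X) :
    Q.subst P = X := by
  have hQs : HasSubst Q := HasSubst.of_constantCoeff_zero' hQ
  have hQ_eq : Q = P.substInvOfIsUnit hP₁ := calc
    Q = subst Q (subst P (P.substInvOfIsUnit hP₁)) := by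
      rw [subst_substInvOfIsUnit_left P hP hP₁, subst_X hQs]
    _ = P.substInvOfIsUnit hP₁ := by
      rw [subst_comp_subst_apply (HasSubst.of_constantCoeff_zero' hP) hQs, h, X_subst]
  rw [hQ_eq, subst_substInvOfIsUnit_left P hP hP₁]

theorem eq_of_forall_coeff_mul_pow_succ_eq [IsDomain R] {F W A : R⟦X⟧}
    (hF : constantCoeff F ≠ 0) (h : ∀ n, coeff n (W * F ^ (n + 1)) = coeff n (A * F ^ (n + 1))) :
    W = A := by
  by_contra hne
  set m := (W - A).order.toNat
  have hlead : coeff m ((W - A) * F ^ (m + 1)) =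
      constantCoeff (divXPowOrder (W - A)) * constantCoeff F ^ (m + 1) := by
    conv_lhs => rw [← X_pow_order_mul_divXPowOrder (f := W - A)]
    rw [mul_assoc, coeff_X_pow_mul', if_pos le_rfl, Nat.sub_self,
      coeff_zero_eq_constantCoeff_apply, map_mul, map_pow]
  have hzero : coeff m ((W - A) * F ^ (m + 1)) = 0 := by
    rw [sub_mul, map_sub, h, sub_self]
  rw [hlead] at hzero
  exact mul_ne_zero (constantCoeff_divXPowOrder_eq_zero_iff.not.mpr (sub_ne_zero.mpr hne))
    (pow_ne_zero _ hF) hzero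

section LagrangeBurmann

variable {K : Type*} [Field K] [CharZero K] {F φ : K⟦X⟧}

theorem coeff_pow_succ_mul_derivative (hFφ : F * φ = X) (hφ : constantCoeff φ = 0) (t : ℕ) :
    coeff t (F ^ (t + 1) * d⁄dX K φ) = if t = 0 then 1 else 0 := by
  have hD : F * d⁄dX K φ = 1 - φ * d⁄dX K F := by
    have := congrArg (d⁄dX K) hFφ
    rw [Derivation.leibniz, derivative_X, smul_eq_mul, smul_eq_mul] at this
    linear_combination this
  cases t with
  | zero => simp [hD, hφ]
  | succ s =>
    have hsplit : F ^ (s + 2) * d⁄dX K φ = F ^ (s + 1) - X * (F ^ s * d⁄dX K F) := by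
      linear_combination F ^ (s + 1) * hD - F ^ s * d⁄dX K F * hFφ
    -- `(F ^ (s + 1))' = (s + 1) F ^ s F'`, read off at `X ^ s`
    have hpow : coeff s (F ^ s * d⁄dX K F) = coeff (s + 1) (F ^ (s + 1)) := by
      have := congrArg (coeff s) (derivative_pow F (s + 1))
      rw [coeff_derivative, mul_assoc, ← nsmul_eq_mul, map_nsmul, nsmul_eq_mul,
        Nat.add_sub_cancel] at this
      push_cast at this
      exact mul_left_cancel₀ (Nat.cast_add_one_ne_zero s) (by linear_combination -this)
    rw [hsplit, map_sub, coeff_succ_X_mul, hpow, sub_self, if_neg s.succ_ne_zero]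

theorem subst_mul_derivative_eq (hF : constantCoeff F ≠ 0) (hFφ : F * φ = X) (A : K⟦X⟧) :
    (mk fun k ↦ coeff k (F ^ (k + 1) * A)).subst φ * d⁄dX K φ = A := by
  have hφ : constantCoeff φ = 0 := by
    simpa [hF] using congrArg constantCoeff hFφ
  have key : ∀ n, ∀ k ≤ n,
      coeff n (φ ^ k * (d⁄dX K φ * F ^ (n + 1))) = if k = n then 1 else 0 := by
    intro n k hk
    have : φ ^ k * (d⁄dX K φ * F ^ (n + 1)) = X ^ k * (F ^ (n - k + 1) * d⁄dX K φ) := by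
      rw [← hFφ, mul_pow, show n + 1 = k + (n - k + 1) by omega, pow_add]
      ring
    rw [this, coeff_X_pow_mul', if_pos hk, coeff_pow_succ_mul_derivative hFφ hφ]
    grind
  refine eq_of_forall_coeff_mul_pow_succ_eq hF fun n ↦ ?_
  rw [mul_assoc, coeff_subst_mul hφ,
    Finset.sum_eq_single_of_mem n (Finset.self_mem_range_succ n), key n n le_rfl, if_pos rfl,
    mul_one, coeff_mk, mul_comm]
  intro k hk hkn
  rw [key n k (Finset.mem_range_succ_iff.mp hk), if_neg hkn, mul_zero]

theorem derivative_log_eq_inv : d⁄dX K (log K) = (1 + X)⁻¹ := by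
  rw [deriv_log, eq_inv_iff_mul_eq_one (by simp)]
  ext (_ | n) <;> simp [mul_add, pow_succ]

end LagrangeBurmann

end PowerSeries

theorem psComp_eq_subst {f g : ℝ⟦X⟧} (hg : constantCoeff g = 0) : psComp f g = f.subst g := by
  ext n
  simpa [psComp] using (coeff_subst_mul hg f 1 n).symm

theorem logOnePlus_eq_log : logOnePlus = log ℝ := by
  ext n
  simp [logOnePlus]

/-- `G(u) = H(1/u)` for `H(v) = Σ_k p(k) v^{k+1}`, so `G^{(-1)} = 1 / H^{(-1)}`, and the paper's
formula is stated with denominators cleared. -/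
theorem lagrange_inversion_of_moments_general
    (g : PowerSeries ℝ)
    (p : ℕ → ℝ)
    (hp : ∀ k : ℕ, p k =
      (PowerSeries.coeff k)
        (((1 + PowerSeries.X) * (1 + PowerSeries.X * g)) ^ (k + 1) *
          (1 + PowerSeries.X)⁻¹) / ((k : ℝ) + 1))
    (H : PowerSeries ℝ)
    (hH : H = PowerSeries.mk fun m => if m = 0 then 0 else p (m - 1))
    (Hinv : PowerSeries ℝ)
    (hinv0 : PowerSeries.constantCoeff Hinv = 0)
    (hinv : psComp H Hinv = PowerSeries.X) :
    (1 + PowerSeries.X * g) * (1 + PowerSeries.X) * psComp Hinv logOnePlus =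
      PowerSeries.X := by
  set F : ℝ⟦X⟧ := (1 + X) * (1 + X * g)
  have hF : constantCoeff F ≠ 0 := by simp [F]
  have hFφ : F * (X * F⁻¹) = X := by rw [mul_left_comm, PowerSeries.mul_inv_cancel F hF, mul_one]
  have hφ₀ : constantCoeff (X * F⁻¹) = 0 := by simp
  have hφ : HasSubst (X * F⁻¹) := HasSubst.of_constantCoeff_zero' hφ₀
  have hH₀ : constantCoeff H = 0 := by simp [hH, ← coeff_zero_eq_constantCoeff_apply]
  have hH' : d⁄dX ℝ H = mk fun k ↦ coeff k (F ^ (k + 1) * (1 + X)⁻¹) := by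
    ext k
    rw [coeff_derivative, hH, coeff_mk, coeff_mk, if_neg k.succ_ne_zero, Nat.add_sub_cancel, hp,
      div_mul_cancel₀ _ (Nat.cast_add_one_ne_zero k)]
  have hHφ : H.subst (X * F⁻¹) = log ℝ := by
    refine derivative.ext ?_ (constantCoeff_subst_eq_zero hφ₀ H hH₀)
    rw [derivative_subst hφ, hH', subst_mul_derivative_eq hF hFφ, derivative_log_eq_inv]
  have hH₁ : IsUnit (coeff 1 H) := by simp [hH, hp, F]
  have hleft : Hinv.subst H = X :=
    subst_eq_X_of_subst_eq_X hH₀ hH₁ hinv0 (by rwa [← psComp_eq_subst hinv0])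
  rw [logOnePlus_eq_log, psComp_eq_subst constantCoeff_log, ← hHφ,
    ← subst_comp_subst_apply (HasSubst.of_constantCoeff_zero' hH₀) hφ, hleft, subst_X hφ,
    mul_comm (1 + X * g)]
  exact hFφ

/-- Lagrange-inversion formula recovering the data `c_a` from the moments
`p(k)`.  Here `g(z) = Σ_{a≥1} c_a z^{a−1}/(a−1)!`, the moment
`p(k) = [z^{-1}] f(z)^{k+1}/((k+1)(1+z))` for `f(z) = (1+z)(1/z + g(z))` — i.e.
the coefficient of `z^k` in `((1+z)(1+z g(z)))^{k+1}(1+z)^{-1}/(k+1)` — and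
`G(u) = Σ_{k≥0} p(k)/u^{k+1} = H(1/u)` with `H(v) = Σ_k p(k) v^{k+1}`.  The
inversion `Σ_a c_a z^{a-1}/(a-1)! = (1+z)^{-1} G^{(-1)}(u)|_{u=log(1+z)} − 1/z`,
with `G^{(-1)} = 1/H^{(-1)}`, is stated in the cleared-denominator form
`(1 + z g(z)) (1+z) H^{(-1)}(log(1+z)) = z`. -/
theorem lagrange_inversion_of_moments
    (c : ℕ → ℝ)
    (hconv : ∃ r : ℝ, 0 < r ∧ Summable fun a : ℕ => |c (a + 1)| * r ^ a / (Nat.factorial a : ℝ))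
    (g : PowerSeries ℝ) (hg : g = PowerSeries.mk fun m => c (m + 1) / (Nat.factorial m : ℝ))
    (p : ℕ → ℝ)
    (hp : ∀ k : ℕ, p k =
      (PowerSeries.coeff k)
        (((1 + PowerSeries.X) * (1 + PowerSeries.X * g)) ^ (k + 1) *
          (1 + PowerSeries.X)⁻¹) / ((k : ℝ) + 1))
    (H : PowerSeries ℝ)
    (hH : H = PowerSeries.mk fun m => if m = 0 then 0 else p (m - 1))
    (Hinv : PowerSeries ℝ)
    (hinv0 : PowerSeries.constantCoeff Hinv = 0)
    (hinv : psComp H Hinv = PowerSeries.X) :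
    (1 + PowerSeries.X * g) * (1 + PowerSeries.X) * psComp Hinv logOnePlus =
      PowerSeries.X :=
  lagrange_inversion_of_moments_general g p hp H hH Hinv hinv0 hinv
end

section
/- Fix k ≥ 1. Expanding the moment functional: p(k) := [z^{-1}] (1/((k+1)(1+z))) · ((1+z)(1/z + Σ_{a=1}^∞ c_a z^{a-1}/(a−1)!))^{k+1}, viewed as a function of the variables c_1, c_2, …, is a polynomial that depends only on c_1,…,c_k, and the dependence on c_k is linear with a nonzero coefficient. -/
open PowerSeries

/-!
Write `A = (1 + z)(1 + z S)` with `S = Σ c_{m+1} z^m / m!`, so that the moment is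
`[z^k] A^{k+1} (1 + z)⁻¹ / (k + 1)`. Changing `c_j` for `j > k` changes `S` only from `z^k` on,
hence `A` and `A^{k+1}` only from `z^{k+1}` on; so `[z^k]` sees only `c₁,…,c_k`, and it is a
polynomial in them because it is the image of the same expression over a polynomial ring.
Changing `c_k` by `t` adds `b = t z^k (1 + z) / (k-1)!` to `A`. As `b² = O(z^{2k})`, only the
linear term `(k + 1) A^k b` of the binomial expansion reaches `z^k`, and since `A(0) = 1` it
contributes `(k + 1) t / (k-1)!`.
-/

section CommRing

variable {R : Type*} [CommRing R]

variable (R) in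
/-- `(1 + X)⁻¹` over any commutative ring; `Inv` on power series needs a field. -/
noncomputable def invOneAddX : R⟦X⟧ := mk fun n => (-1 : R) ^ n

theorem one_add_X_mul_invOneAddX : (1 + X) * invOneAddX R = 1 := by
  ext n
  rw [add_mul, one_mul, map_add, invOneAddX]
  cases n with
  | zero => simp
  | succ n => simp [coeff_succ_X_mul, pow_succ]

theorem map_invOneAddX {S : Type*} [CommRing S] (f : R →+* S) :
    map f (invOneAddX R) = invOneAddX S := by
  ext n
  simp [invOneAddX]

theorem invOneAddX_eq_inv {K : Type*} [Field K] : invOneAddX K = (1 + X)⁻¹ := by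
  rw [PowerSeries.eq_inv_iff_mul_eq_one (by simp), mul_comm, one_add_X_mul_invOneAddX]

noncomputable def momentSeries (n : ℕ) (S : R⟦X⟧) : R⟦X⟧ :=
  ((1 + X) * (1 + X * S)) ^ (n + 1) * invOneAddX R

theorem map_momentSeries {S : Type*} [CommRing S] (f : R →+* S) (n : ℕ) (φ : R⟦X⟧) :
    map f (momentSeries n φ) = momentSeries n (map f φ) := by
  simp [momentSeries, map_invOneAddX]

theorem coeff_momentSeries_congr {m : ℕ} (n : ℕ) {φ ψ : R⟦X⟧} (h : X ^ m ∣ φ - ψ) :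
    coeff m (momentSeries n φ) = coeff m (momentSeries n ψ) := by
  have hbase : X ^ (m + 1) ∣ (1 + X) * (1 + X * φ) - (1 + X) * (1 + X * ψ) := by
    rw [show (1 + X) * (1 + X * φ) - (1 + X) * (1 + X * ψ) = (1 + X) * X * (φ - ψ) by ring,
      pow_succ']
    exact mul_dvd_mul (dvd_mul_left _ _) h
  have hpow := (hbase.trans (sub_dvd_pow_sub_pow _ _ (n + 1))).mul_right (invOneAddX R)
  rw [← sub_eq_zero, ← map_sub, momentSeries, momentSeries, ← sub_mul]
  exact X_pow_dvd_iff.mp hpow m (Nat.lt_succ_self m)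

theorem coeff_momentSeries_add_C_mul_X_pow (n : ℕ) (φ : R⟦X⟧) (t : R) :
    coeff (n + 1) (momentSeries (n + 1) (φ + C t * X ^ n)) =
      coeff (n + 1) (momentSeries (n + 1) φ) + (n + 2) * t := by
  set A : R⟦X⟧ := (1 + X) * (1 + X * φ)
  set B : R⟦X⟧ := C t * X ^ (n + 1) * (1 + X)
  have hA : (1 + X) * (1 + X * (φ + C t * X ^ n)) = A + B := by ring
  obtain ⟨r, hr⟩ := ((Polynomial.X : Polynomial R⟦X⟧) ^ (n + 2)).binomExpansion A B
  simp only [Polynomial.eval_pow, Polynomial.eval_X, Polynomial.derivative_X_pow,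
    Polynomial.eval_mul, Polynomial.eval_C, show n + 2 - 1 = n + 1 from rfl] at hr
  have hlinear :
      coeff (n + 1) (((n + 2 : ℕ) : R⟦X⟧) * A ^ (n + 1) * B * invOneAddX R) = (n + 2) * t := by
    have : ((n + 2 : ℕ) : R⟦X⟧) * A ^ (n + 1) * B * invOneAddX R =
        ((n + 2 : ℕ) : R⟦X⟧) * A ^ (n + 1) * C t * X ^ (n + 1) * ((1 + X) * invOneAddX R) := by
      ring
    rw [this, one_add_X_mul_invOneAddX, mul_one, coeff_mul_X_pow', if_pos le_rfl, Nat.sub_self,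
      coeff_zero_eq_constantCoeff]
    simp [A, map_ofNat]
  have hsquare : coeff (n + 1) (r * B ^ 2 * invOneAddX R) = 0 := by
    have hB : X ^ (n + 1) ∣ B := ⟨C t * (1 + X), by ring⟩
    have hB2 : X ^ ((n + 1) * 2) ∣ B ^ 2 :=
      pow_mul (X : R⟦X⟧) (n + 1) 2 ▸ pow_dvd_pow_of_dvd hB 2
    exact X_pow_dvd_iff.mp ((hB2.mul_left r).mul_right _) (n + 1) (by omega)
  rw [momentSeries, hA, hr, add_mul, add_mul, map_add, map_add, hlinear, hsquare, add_zero,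
    momentSeries]

end CommRing

section Field

variable {K : Type*} [Field K]

noncomputable def shiftedEgf (c : ℕ → K) : K⟦X⟧ := mk fun m => c (m + 1) / (m.factorial : K)

variable (K) in
/-- The truncation of `shiftedEgf` below degree `k`, with `c (m + 1)` replaced by the variable
`m`. -/
noncomputable def genericShiftedEgf (k : ℕ) : (MvPolynomial (Fin k) K)⟦X⟧ :=
  mk fun m => if h : m < k then MvPolynomial.C (m.factorial : K)⁻¹ * MvPolynomial.X ⟨m, h⟩ else 0

theorem X_pow_dvd_shiftedEgf_sub_map_genericShiftedEgf (k : ℕ) (c : ℕ → K) :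
    X ^ k ∣ shiftedEgf c -
      map (MvPolynomial.eval fun i : Fin k => c (i + 1)) (genericShiftedEgf K k) :=
  X_pow_dvd_iff.mpr fun m hm => by
    simp [shiftedEgf, genericShiftedEgf, hm, div_eq_inv_mul]

theorem shiftedEgf_update (c : ℕ → K) (n : ℕ) (t : K) :
    shiftedEgf (Function.update c (n + 1) t) =
      shiftedEgf (Function.update c (n + 1) 0) + C (t / n.factorial) * X ^ n := by
  ext m
  rcases eq_or_ne m n with rfl | hmn
  · simp [shiftedEgf]
  · simp [shiftedEgf, coeff_X_pow, hmn]

theorem exists_mvPolynomial_coeff_momentSeries_shiftedEgf (n k : ℕ) :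
    ∃ Q : MvPolynomial (Fin k) K, ∀ c : ℕ → K,
      coeff k (momentSeries n (shiftedEgf c)) = MvPolynomial.eval (fun i : Fin k => c (i + 1)) Q :=
  ⟨coeff k (momentSeries n (genericShiftedEgf K k)), fun c => by
    rw [coeff_momentSeries_congr n (X_pow_dvd_shiftedEgf_sub_map_genericShiftedEgf k c),
      ← coeff_map, map_momentSeries]⟩

end Field

/-- Fix `k ≥ 1`.  The moment
`p(k) = [z^{-1}] (1/((k+1)(1+z))) ((1+z)(1/z + Σ_{a≥1} c_a z^{a-1}/(a-1)!))^{k+1}`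
— i.e. the coefficient of `z^k` in
`((1+z)(1 + z Σ_{a≥1} c_a z^{a-1}/(a-1)!))^{k+1} (1+z)^{-1} / (k+1)` —
viewed as a function of `c₁, c₂, …`, is a polynomial depending only on
`c₁,…,c_k`, and the dependence on `c_k` is linear with a nonzero coefficient. -/
theorem moment_polynomial_in_c (k : ℕ) (hk : 1 ≤ k)
    (P : (ℕ → ℝ) → ℝ)
    (hP : ∀ c : ℕ → ℝ, P c =
      (PowerSeries.coeff (R := ℝ) k)
        (((1 + PowerSeries.X) *
            (1 + PowerSeries.X *
              PowerSeries.mk fun m => c (m + 1) / (Nat.factorial m : ℝ))) ^ (k + 1) *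
          (1 + PowerSeries.X)⁻¹) / ((k : ℝ) + 1)) :
    (∃ Q : MvPolynomial (Fin k) ℝ, ∀ c : ℕ → ℝ,
        P c = MvPolynomial.eval (fun i : Fin k => c ((i : ℕ) + 1)) Q) ∧
    ∃ α : ℝ, α ≠ 0 ∧ ∀ (c : ℕ → ℝ) (t : ℝ),
        P (Function.update c k t) = P (Function.update c k 0) + α * t := by
  have hP' (c : ℕ → ℝ) : P c = coeff k (momentSeries k (shiftedEgf c)) / (k + 1) := by
    rw [hP, momentSeries, invOneAddX_eq_inv, shiftedEgf]
  constructor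
  · obtain ⟨Q, hQ⟩ := exists_mvPolynomial_coeff_momentSeries_shiftedEgf (K := ℝ) k k
    exact ⟨MvPolynomial.C ((k : ℝ) + 1)⁻¹ * Q, fun c => by simp [hP', hQ, div_eq_inv_mul]⟩
  · obtain ⟨n, rfl⟩ := Nat.exists_eq_add_of_le' hk
    refine ⟨(n.factorial : ℝ)⁻¹, by positivity, fun c t => ?_⟩
    rw [hP', hP', shiftedEgf_update, coeff_momentSeries_add_C_mul_X_pow]
    push_cast
    field_simp
    ring
end
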